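/- For every ε > 0 there exists a compact set B ⊂ ℝ² such that for all parameters K, K̃ ∈ (0, 1) and all integers m, n ≥ 1, P( (K·U₁, K̃·V₁) ∉ B | (U₀, V₀) = (m, n) ) < ε; that is, one step of the normed stochastic Ricker competition chain lands in a fixed compact set with probability at least 1 − ε, uniformly over all starting states and all small inhibition parameters. -/

import Mathlib

/-! Markov's inequality, one coordinate at a time. From `(m, n)` the normed count `K U₁` has mean
`K m e^{r - K (m + b n)} ≤ (K m) e^{-K m} e^r ≤ e^{r - 1}`, because `x e^{-x} ≤ e^{-1}`; likewise
`K̃ V₁` has mean at most `e^{r̃ - 1}`. So each coordinate exceeds `M` with probability at most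
`e^{r - 1} / M`, resp. `e^{r̃ - 1} / M`, whatever `K, K̃, m, n` are, and `B = [0, M]²` with
`M = 2 (e^{r - 1} + e^{r̃ - 1}) / ε` works by a union bound. -/

open Filter
open scoped Classical

/-- The modified offspring distribution: given inhibition exponent c, the litter size has
P(ξ = k) = e^{−c}·q(k) for k ≥ 1 and P(ξ = 0) = 1 − e^{−c}·(1 − q(0)). -/
noncomputable def modPMF (c : ℝ) (q : ℕ → ℝ) : ℕ → ℝ :=
  fun k => if k = 0 then 1 - Real.exp (-c) * (1 - q 0) else Real.exp (-c) * q k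

/-- `convPow f m` is the m-fold convolution power of the pmf `f` on ℕ: the distribution of
the sum of m i.i.d. random variables with pmf `f` (the point mass at 0 when m = 0). -/
noncomputable def convPow (f : ℕ → ℝ) : ℕ → ℕ → ℝ
  | 0, k => if k = 0 then 1 else 0
  | m + 1, k => ∑ i ∈ Finset.range (k + 1), f i * convPow f m (k - i)

/-- The transition probabilities of the stochastic Ricker competition chain (U_t, V_t) on
ℤ_{≥0}²: from (m,n), U_{t+1} is a sum of m i.i.d. litters with pmf `modPMF (K(m+bn)) q` and,
independently, V_{t+1} is a sum of n i.i.d. litters with pmf `modPMF (K̃(am+n)) q̃`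
(a coordinate equal to 0 stays 0). -/
noncomputable def rickerKernel (a b K K' : ℝ) (q q' : ℕ → ℝ) :
    ℕ × ℕ → ℕ × ℕ → ℝ :=
  fun p p' =>
    convPow (modPMF (K * ((p.1 : ℝ) + b * (p.2 : ℝ))) q) p.1 p'.1 *
    convPow (modPMF (K' * (a * (p.1 : ℝ) + (p.2 : ℝ))) q') p.2 p'.2

/-- t-step transition probabilities of a Markov kernel on ℤ_{≥0}². -/
noncomputable def kernelPow (P : ℕ × ℕ → ℕ × ℕ → ℝ) : ℕ → ℕ × ℕ → ℕ × ℕ → ℝ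
  | 0, p, p' => if p = p' then 1 else 0
  | t + 1, p, p' => ∑' s : ℕ × ℕ, P p s * kernelPow P t s p'

open Real

section Litter

variable {c μ : ℝ} {q : ℕ → ℝ}

lemma modPMF_nonneg (hq : ∀ k, 0 ≤ q k) (hq1 : HasSum q 1) (hc : 0 ≤ c) (k : ℕ) :
    0 ≤ modPMF c q k := by
  unfold modPMF
  split_ifs
  · have hq0 : q 0 ≤ 1 := le_hasSum hq1 0 fun j _ => hq j
    have hexp : exp (-c) ≤ 1 := exp_le_one_iff.2 (by linarith)
    nlinarith [hq 0, exp_pos (-c)]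
  · exact mul_nonneg (exp_pos _).le (hq k)

lemma hasSum_modPMF (hq1 : HasSum q 1) : HasSum (modPMF c q) 1 := by
  have h := (hq1.mul_left (exp (-c))).add (hasSum_ite_eq 0 (1 - exp (-c)))
  rw [mul_one, add_sub_cancel] at h
  refine h.congr_fun fun k => ?_
  unfold modPMF
  split_ifs with hk <;> simp [hk]
  ring

lemma hasSum_mul_modPMF (hm : HasSum (fun k : ℕ => (k : ℝ) * q k) μ) :
    HasSum (fun k : ℕ => (k : ℝ) * modPMF c q k) (exp (-c) * μ) := by
  refine (hm.mul_left (exp (-c))).congr_fun fun k => ?_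
  unfold modPMF
  split_ifs with hk
  · simp [hk]
  · ring

end Litter

section Convolution

variable {f : ℕ → ℝ} {μ : ℝ}

lemma convPow_succ (m k : ℕ) :
    convPow f (m + 1) k = ∑ i ∈ Finset.range (k + 1), f i * convPow f m (k - i) := rfl

lemma convPow_nonneg (hf : ∀ k, 0 ≤ f k) (m k : ℕ) : 0 ≤ convPow f m k := by
  induction m generalizing k with
  | zero => unfold convPow; split_ifs <;> norm_num
  | succ m ih => exact Finset.sum_nonneg fun i _ => mul_nonneg (hf i) (ih _)

lemma hasSum_convPow {s : ℝ} (hf : HasSum f s) (m : ℕ) : HasSum (convPow f m) (s ^ m) := by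
  induction m with
  | zero => exact hasSum_ite_eq 0 1
  | succ m ih =>
    have h := hasSum_sum_range_mul_of_summable_norm (R := ℝ) hf.summable.abs ih.summable.abs
    rw [hf.tsum_eq, ih.tsum_eq, ← pow_succ'] at h
    exact funext (convPow_succ m) ▸ h

lemma hasSum_mul_convPow (h1 : HasSum f 1) (hm : HasSum (fun k : ℕ => (k : ℝ) * f k) μ)
    (m : ℕ) : HasSum (fun k : ℕ => (k : ℝ) * convPow f m k) (m * μ) := by
  induction m with
  | zero =>
    rw [Nat.cast_zero, zero_mul]
    refine hasSum_zero.congr_fun fun k => ?_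
    unfold convPow
    split_ifs with hk <;> simp [hk]
  | succ m ih =>
    have hg1 : HasSum (convPow f m) 1 := by simpa using hasSum_convPow h1 m
    -- `k = i + (k - i)` splits the mean of a Cauchy product into two Cauchy products.
    have H := (hasSum_sum_range_mul_of_summable_norm (R := ℝ) hm.summable.abs
      hg1.summable.abs).add (hasSum_sum_range_mul_of_summable_norm (R := ℝ)
        h1.summable.abs ih.summable.abs)
    rw [hm.tsum_eq, hg1.tsum_eq, h1.tsum_eq, ih.tsum_eq,
      show μ * 1 + 1 * (m * μ) = ((m + 1 : ℕ) : ℝ) * μ by push_cast; ring] at H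
    refine H.congr_fun fun k => ?_
    rw [convPow_succ, Finset.mul_sum, ← Finset.sum_add_distrib]
    refine Finset.sum_congr rfl fun i hi => ?_
    rw [Nat.cast_sub (Nat.lt_succ_iff.mp (Finset.mem_range.mp hi))]
    ring

end Convolution

lemma tsum_ite_lt_le_div {h : ℕ → ℝ} {μ T : ℝ} (h0 : ∀ k, 0 ≤ h k)
    (hμ : HasSum (fun k : ℕ => (k : ℝ) * h k) μ) (hT : 0 < T) :
    ∑' k : ℕ, (if T < (k : ℝ) then h k else 0) ≤ μ / T := by
  have hle : ∀ k : ℕ, (if T < (k : ℝ) then h k else 0) ≤ (k : ℝ) * h k / T := by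
    intro k
    split_ifs with hk
    · rw [le_div_iff₀ hT]
      nlinarith [h0 k]
    · exact div_nonneg (mul_nonneg k.cast_nonneg (h0 k)) hT.le
  have hs : Summable fun k : ℕ => (k : ℝ) * h k / T := hμ.summable.div_const T
  calc ∑' k : ℕ, (if T < (k : ℝ) then h k else 0) ≤ ∑' k : ℕ, (k : ℝ) * h k / T :=
        (hs.of_nonneg_of_le (fun k => by split_ifs; exacts [h0 k, le_rfl]) hle).tsum_le_tsum
          hle hs
    _ = μ / T := by rw [tsum_div_const, hμ.tsum_eq]

lemma tsum_ite_or_mul_le {α β : Type*} {g₁ : α → ℝ} {g₂ : β → ℝ} (P₁ : α → Prop) (P₂ : β → Prop)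
    [DecidablePred P₁] [DecidablePred P₂]
    (hg₁ : ∀ a, 0 ≤ g₁ a) (hg₂ : ∀ b, 0 ≤ g₂ b) (h₁ : HasSum g₁ 1) (h₂ : HasSum g₂ 1) :
    ∑' p : α × β, (if P₁ p.1 ∨ P₂ p.2 then g₁ p.1 * g₂ p.2 else 0) ≤
      (∑' a, if P₁ a then g₁ a else 0) + ∑' b, if P₂ b then g₂ b else 0 := by
  set G₁ : α → ℝ := fun a => if P₁ a then g₁ a else 0
  set G₂ : β → ℝ := fun b => if P₂ b then g₂ b else 0
  have hG₁ : ∀ a, 0 ≤ G₁ a ∧ G₁ a ≤ g₁ a := fun a => by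
    simp only [G₁]; split_ifs <;> simp [hg₁ a]
  have hG₂ : ∀ b, 0 ≤ G₂ b ∧ G₂ b ≤ g₂ b := fun b => by
    simp only [G₂]; split_ifs <;> simp [hg₂ b]
  have sG₁ : Summable G₁ := h₁.summable.of_nonneg_of_le (fun a => (hG₁ a).1) fun a => (hG₁ a).2
  have sG₂ : Summable G₂ := h₂.summable.of_nonneg_of_le (fun b => (hG₂ b).1) fun b => (hG₂ b).2
  have s₁ : Summable fun p : α × β => G₁ p.1 * g₂ p.2 :=
    sG₁.mul_of_nonneg h₂.summable (fun a => (hG₁ a).1) hg₂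
  have s₂ : Summable fun p : α × β => g₁ p.1 * G₂ p.2 :=
    h₁.summable.mul_of_nonneg sG₂ hg₁ fun b => (hG₂ b).1
  have hle : ∀ p : α × β, (if P₁ p.1 ∨ P₂ p.2 then g₁ p.1 * g₂ p.2 else 0) ≤
      G₁ p.1 * g₂ p.2 + g₁ p.1 * G₂ p.2 := by
    intro p
    have := mul_nonneg (hG₁ p.1).1 (hg₂ p.2)
    have := mul_nonneg (hg₁ p.1) (hG₂ p.2).1
    have := mul_nonneg (hg₁ p.1) (hg₂ p.2)
    simp only [G₁, G₂]
    split_ifs <;> simp_all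
  calc _ ≤ ∑' p : α × β, (G₁ p.1 * g₂ p.2 + g₁ p.1 * G₂ p.2) := by
        refine Summable.tsum_le_tsum hle ?_ (s₁.add s₂)
        refine (s₁.add s₂).of_nonneg_of_le (fun p => ?_) hle
        split_ifs
        exacts [mul_nonneg (hg₁ _) (hg₂ _), le_rfl]
    _ = (∑' a, G₁ a) * (∑' b, g₂ b) + (∑' a, g₁ a) * ∑' b, G₂ b := by
        rw [s₁.tsum_add s₂, sG₁.tsum_mul_tsum h₂.summable s₁,
          h₁.summable.tsum_mul_tsum sG₂ s₂]
    _ = _ := by rw [h₁.tsum_eq, h₂.tsum_eq, mul_one, one_mul]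

lemma tsum_convPow_modPMF_tail_le {q : ℕ → ℝ} {r c K M : ℝ} {m : ℕ}
    (hq : ∀ k, 0 ≤ q k) (hq1 : HasSum q 1) (hqmean : HasSum (fun k : ℕ => (k : ℝ) * q k) (exp r))
    (hK : 0 < K) (hM : 0 < M) (hc : K * m ≤ c) :
    ∑' k : ℕ, (if M / K < (k : ℝ) then convPow (modPMF c q) m k else 0) ≤ exp (r - 1) / M := by
  have hc0 : 0 ≤ c := (mul_nonneg hK.le m.cast_nonneg).trans hc
  have hf := modPMF_nonneg hq hq1 hc0
  refine (tsum_ite_lt_le_div (convPow_nonneg hf m)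
    (hasSum_mul_convPow (hasSum_modPMF hq1) (hasSum_mul_modPMF hqmean) m)
    (div_pos hM hK)).trans ?_
  have hmean : K * m * exp (-c) ≤ exp (-1) :=
    calc K * m * exp (-c) ≤ K * m * exp (-(K * m)) := by gcongr
      _ ≤ exp (-1) := mul_exp_neg_le_exp_neg_one _
  rw [div_div_eq_mul_div]
  gcongr
  calc m * (exp (-c) * exp r) * K = K * m * exp (-c) * exp r := by ring
    _ ≤ exp (-1) * exp r := by gcongr
    _ = exp (r - 1) := by rw [← exp_add]; ring_nf

lemma notMem_Icc_prod_Icc_iff {K K' M : ℝ} (hK : 0 < K) (hK' : 0 < K') (i j : ℕ) :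
    ((K * i, K' * j) ∉ Set.Icc 0 M ×ˢ Set.Icc 0 M) ↔ M / K < i ∨ M / K' < j := by
  have hi : 0 ≤ K * i := by positivity
  have hj : 0 ≤ K' * j := by positivity
  simp only [Set.mem_prod, Set.mem_Icc, hi, hj, true_and, not_and_or, not_le, div_lt_iff₀' hK,
    div_lt_iff₀' hK']

theorem normed_chain_one_step_uniformly_tight_general
    (r r' a b : ℝ) (ha : 0 < a) (hb : 0 < b)
    (q q' : ℕ → ℝ)
    (hq : ∀ k, 0 ≤ q k) (hq1 : HasSum q 1)
    (hqmean : HasSum (fun k : ℕ => (k : ℝ) * q k) (Real.exp r))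
    (hq' : ∀ k, 0 ≤ q' k) (hq1' : HasSum q' 1)
    (hqmean' : HasSum (fun k : ℕ => (k : ℝ) * q' k) (Real.exp r'))
    (ε : ℝ) (hε : 0 < ε) :
    ∃ B : Set (ℝ × ℝ), IsCompact B ∧
      ∀ K K' : ℝ, 0 < K → K < 1 → 0 < K' → K' < 1 →
        ∀ m n : ℕ, 1 ≤ m → 1 ≤ n →
          (∑' p' : ℕ × ℕ,
            if ((K * p'.1 : ℝ), (K' * p'.2 : ℝ)) ∉ B
            then rickerKernel a b K K' q q' (m, n) p' else 0) < ε := by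
  set M := 2 * (exp (r - 1) + exp (r' - 1)) / ε
  have hM : 0 < M := by positivity
  refine ⟨Set.Icc 0 M ×ˢ Set.Icc 0 M, isCompact_Icc.prod isCompact_Icc,
    fun K K' hK _ hK' _ m n _ _ => ?_⟩
  have hc : K * m ≤ K * (m + b * n) := by gcongr; exact le_add_of_nonneg_right (by positivity)
  have hc' : K' * n ≤ K' * (a * m + n) := by gcongr; exact le_add_of_nonneg_left (by positivity)
  have hf := modPMF_nonneg hq hq1 ((mul_nonneg hK.le m.cast_nonneg).trans hc)
  have hf' := modPMF_nonneg hq' hq1' ((mul_nonneg hK'.le n.cast_nonneg).trans hc')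
  calc _ = ∑' p : ℕ × ℕ, if M / K < p.1 ∨ M / K' < p.2 then
          convPow (modPMF (K * (m + b * n)) q) m p.1 *
            convPow (modPMF (K' * (a * m + n)) q') n p.2 else 0 :=
        tsum_congr fun p => by simp only [notMem_Icc_prod_Icc_iff hK hK']; rfl
    _ ≤ exp (r - 1) / M + exp (r' - 1) / M :=
        (tsum_ite_or_mul_le (fun i : ℕ => M / K < i) (fun j : ℕ => M / K' < j)
          (convPow_nonneg hf m) (convPow_nonneg hf' n)
          (by simpa using hasSum_convPow (hasSum_modPMF hq1) m)
          (by simpa using hasSum_convPow (hasSum_modPMF hq1') n)).trans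
          (add_le_add (tsum_convPow_modPMF_tail_le hq hq1 hqmean hK hM hc)
            (tsum_convPow_modPMF_tail_le hq' hq1' hqmean' hK' hM hc'))
    _ = ε / 2 := by simp only [M]; field_simp
    _ < ε := half_lt_self hε

/-- For every ε > 0 there is one fixed compact set B ⊂ ℝ² such that one step of the
normed stochastic Ricker competition chain lands in B with probability at least 1 − ε,
uniformly over all starting all-positive states (m,n) and all inhibition parameters
K, K̃ ∈ (0,1). -/
theorem normed_chain_one_step_uniformly_tight
    (r r' a b : ℝ) (ha : 0 < a) (hb : 0 < b)
    (q q' : ℕ → ℝ)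
    (hq : ∀ k, 0 ≤ q k) (hq1 : HasSum q 1)
    (hqmean : HasSum (fun k : ℕ => (k : ℝ) * q k) (Real.exp r))
    (hqvar : ∃ v : ℝ, HasSum (fun k : ℕ => (k : ℝ) ^ 2 * q k) v)
    (hq' : ∀ k, 0 ≤ q' k) (hq1' : HasSum q' 1)
    (hqmean' : HasSum (fun k : ℕ => (k : ℝ) * q' k) (Real.exp r'))
    (hqvar' : ∃ v : ℝ, HasSum (fun k : ℕ => (k : ℝ) ^ 2 * q' k) v)
    (ε : ℝ) (hε : 0 < ε) :
    ∃ B : Set (ℝ × ℝ), IsCompact B ∧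
      ∀ K K' : ℝ, 0 < K → K < 1 → 0 < K' → K' < 1 →
        ∀ m n : ℕ, 1 ≤ m → 1 ≤ n →
          (∑' p' : ℕ × ℕ,
            if ((K * p'.1 : ℝ), (K' * p'.2 : ℝ)) ∉ B
            then rickerKernel a b K K' q q' (m, n) p' else 0) < ε :=
  normed_chain_one_step_uniformly_tight_general r r' a b ha hb q q' hq hq1 hqmean hq' hq1' hqmean' ε
    hε
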